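/- arXiv:2503.20272 — 9 statements merged into one kernel-verified Lean document; each statement's English description precedes it below -/
import Mathlib

section
/- Suppose X is partitioned into pairwise disjoint sets H̃, L̃, Ũ with H̃ ∪ L̃ ∪ Ũ = X such that pH(x) = r^max(x) for all x ∈ H̃, pL(x) = r^max(x) for all x ∈ L̃, and pU(x) = r^max(x) for all x ∈ Ũ. Then the probability of the ε-accuracy event A satisfies μ(A) ≥ 1 − Σ_{x ∈ X} r^min(x). -/
open MeasureTheory

theorem stmt_0
    {Ω : Type*} [MeasurableSpace Ω] (μ : Measure Ω) [IsProbabilityMeasure μ]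
    {X : Type*} [Fintype X] [DecidableEq X]
    (θ ε : ℝ) (hε : 0 < ε)
    (F : X → Ω → ℝ) (hF : ∀ x, Measurable (F x))
    (pH pL pU rmin rmax : X → ℝ)
    (hpH : ∀ x, pH x = (μ {ω | θ < F x ω}).toReal)
    (hpL : ∀ x, pL x = (μ {ω | F x ω ≤ θ}).toReal)
    (hpU : ∀ x, pU x = (μ {ω | θ - ε / 2 < F x ω ∧ F x ω ≤ θ + ε / 2}).toReal)
    (hrmin : ∀ x, rmin x = min (pH x) (min (pL x) (1 - pU x)))
    (hrmax : ∀ x, rmax x = max (pH x) (max (pL x) (pU x)))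
    (H L U : Finset X)
    (hHL : Disjoint H L) (hHU : Disjoint H U) (hLU : Disjoint L U)
    (hunion : H ∪ L ∪ U = Finset.univ)
    (hH : ∀ x ∈ H, pH x = rmax x)
    (hL : ∀ x ∈ L, pL x = rmax x)
    (hU : ∀ x ∈ U, pU x = rmax x) :
    1 - ∑ x, rmin x ≤
      (μ {ω | (∀ x ∈ H, θ < F x ω) ∧ (∀ x ∈ L, F x ω ≤ θ) ∧
              (∀ x ∈ U, θ - ε / 2 < F x ω ∧ F x ω ≤ θ + ε / 2)}).toReal := by
  classical
  -- measurable building-block sets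
  have hmH : ∀ x : X, MeasurableSet {ω | θ < F x ω} := fun x =>
    measurableSet_lt measurable_const (hF x)
  have hmL : ∀ x : X, MeasurableSet {ω | F x ω ≤ θ} := fun x =>
    measurableSet_le (hF x) measurable_const
  have hmU : ∀ x : X, MeasurableSet {ω | θ - ε / 2 < F x ω ∧ F x ω ≤ θ + ε / 2} := fun x =>
    (measurableSet_lt measurable_const (hF x)).inter (measurableSet_le (hF x) measurable_const)
  -- pH + pL = 1
  have probc : ∀ s : Set Ω, MeasurableSet s → (μ sᶜ).toReal = 1 - (μ s).toReal := by
    intro s hs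
    rw [prob_compl_eq_one_sub hs, ENNReal.toReal_sub_of_le prob_le_one ENNReal.one_ne_top,
      ENNReal.toReal_one]
  have hcompl : ∀ x : X, pL x = 1 - pH x := by
    intro x
    have h1 : ({ω | F x ω ≤ θ} : Set Ω) = {ω | θ < F x ω}ᶜ := by
      ext ω; simp [not_lt]
    rw [hpL, hpH, h1, probc _ (hmH x)]
  -- the bad sets
  set B : X → Set Ω := fun x =>
    if x ∈ H then {ω | ¬ θ < F x ω}
    else if x ∈ L then {ω | ¬ F x ω ≤ θ}
    else {ω | ¬ (θ - ε / 2 < F x ω ∧ F x ω ≤ θ + ε / 2)} with hB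
  -- each bad set has probability at most rmin x
  have hBle : ∀ x : X, (μ (B x)).toReal ≤ rmin x := by
    intro x
    have hpHnn : 0 ≤ pH x := by rw [hpH]; exact ENNReal.toReal_nonneg
    have hpLnn : 0 ≤ pL x := by rw [hpL]; exact ENNReal.toReal_nonneg
    have hpUnn : 0 ≤ pU x := by rw [hpU]; exact ENNReal.toReal_nonneg
    by_cases hx : x ∈ H
    · have hBx : B x = {ω | F x ω ≤ θ} := by
        rw [hB]; simp only [hx, if_true]; ext ω; simp [not_lt]
      rw [hBx, ← hpL, hrmin]
      have hmax := hH x hx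
      rw [hrmax] at hmax
      have h1 : pL x ≤ pH x := hmax ▸ le_max_of_le_right (le_max_left _ _)
      have h2 : pU x ≤ pH x := hmax ▸ le_max_of_le_right (le_max_right _ _)
      have h3 : pL x ≤ 1 - pU x := by
        have := hcompl x; linarith
      exact le_min h1 (le_min le_rfl h3)
    · by_cases hx' : x ∈ L
      · have hBx : B x = {ω | θ < F x ω} := by
          rw [hB]; simp only [hx, if_false, hx', if_true]; ext ω; simp [not_le]
        rw [hBx, ← hpH, hrmin]
        have hmax := hL x hx'
        rw [hrmax] at hmax
        have h1 : pH x ≤ pL x := hmax ▸ le_max_left _ _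
        have h2 : pU x ≤ pL x := hmax ▸ le_max_of_le_right (le_max_right _ _)
        have h3 : pH x ≤ 1 - pU x := by
          have := hcompl x; linarith
        exact le_min le_rfl (le_min h1 h3)
      · have hx'' : x ∈ U := by
          have : x ∈ H ∪ L ∪ U := hunion ▸ Finset.mem_univ x
          simp only [Finset.mem_union] at this
          tauto
        have hBx : B x = {ω | θ - ε / 2 < F x ω ∧ F x ω ≤ θ + ε / 2}ᶜ := by
          rw [hB]; simp only [hx, if_false, hx', if_false]; rfl
        rw [hBx, probc _ (hmU x), ← hpU, hrmin]
        have hmax := hU x hx''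
        rw [hrmax] at hmax
        have h1 : pH x ≤ pU x := hmax ▸ le_max_left _ _
        have h2 : pL x ≤ pU x := hmax ▸ le_max_of_le_right (le_max_left _ _)
        have hc := hcompl x
        refine le_min (by linarith) (le_min (by linarith) le_rfl)
  -- the good event
  set A : Set Ω := {ω | (∀ x ∈ H, θ < F x ω) ∧ (∀ x ∈ L, F x ω ≤ θ) ∧
      (∀ x ∈ U, θ - ε / 2 < F x ω ∧ F x ω ≤ θ + ε / 2)} with hA
  have hmA : MeasurableSet A := by
    have : A = (⋂ x ∈ H, {ω | θ < F x ω}) ∩ ((⋂ x ∈ L, {ω | F x ω ≤ θ}) ∩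
        (⋂ x ∈ U, {ω | θ - ε / 2 < F x ω ∧ F x ω ≤ θ + ε / 2})) := by
      ext ω; simp [hA, Set.mem_iInter]
    rw [this]
    exact ((MeasurableSet.biInter (Set.to_countable _) fun x _ => hmH x).inter
      ((MeasurableSet.biInter (Set.to_countable _) fun x _ => hmL x).inter
        (MeasurableSet.biInter (Set.to_countable _) fun x _ => hmU x)))
  -- complement is covered by the bad sets
  have hsub : Aᶜ ⊆ ⋃ x : X, B x := by
    intro ω hω
    by_contra hcon
    simp only [Set.mem_iUnion, not_exists] at hcon
    apply hω
    refine ⟨fun x hx => ?_, fun x hx => ?_, fun x hx => ?_⟩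
    · have := hcon x
      rw [hB] at this; simp only [hx, if_true, Set.mem_setOf_eq, not_not] at this
      exact this
    · have := hcon x
      have hxH : x ∉ H := fun h => (Finset.disjoint_left.mp hHL) h hx
      rw [hB] at this; simp only [hxH, if_false, hx, if_true, Set.mem_setOf_eq, not_not] at this
      exact this
    · have := hcon x
      have hxH : x ∉ H := fun h => (Finset.disjoint_left.mp hHU) h hx
      have hxL : x ∉ L := fun h => (Finset.disjoint_left.mp hLU) h hx
      rw [hB] at this
      simp only [hxH, if_false, hxL, Set.mem_setOf_eq, not_not] at this
      exact this
  have hAc : (μ Aᶜ).toReal ≤ ∑ x, (μ (B x)).toReal := by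
    have h1 : μ Aᶜ ≤ ∑ x, μ (B x) :=
      le_trans (measure_mono hsub) (measure_iUnion_fintype_le μ B)
    have h2 : (∑ x, μ (B x)).toReal = ∑ x, (μ (B x)).toReal :=
      ENNReal.toReal_sum (fun x _ => measure_ne_top μ _)
    calc (μ Aᶜ).toReal ≤ (∑ x, μ (B x)).toReal :=
          ENNReal.toReal_mono (by
            exact ENNReal.sum_ne_top.mpr fun x _ => measure_ne_top μ _) h1
      _ = ∑ x, (μ (B x)).toReal := h2
  have hfin : (μ Aᶜ).toReal = 1 - (μ A).toReal := probc _ hmA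
  have hsum : ∑ x, (μ (B x)).toReal ≤ ∑ x, rmin x :=
    Finset.sum_le_sum fun x _ => hBle x
  have : (μ A).toReal = 1 - (μ Aᶜ).toReal := by linarith
  linarith
end

section
/- The probability that simultaneously for every x ∈ X one has |z(x)(ω) − pH(x)| ≤ γ(x) and w(x)(ω) ≥ η(x) is at least 1 − Σ_{x ∈ X} r^min(x); that is, μ{ω | ∀ x ∈ X, |z(x)(ω) − pH(x)| ≤ γ(x) ∧ w(x)(ω) ≥ η(x)} ≥ 1 − Σ_{x ∈ X} r^min(x). -/
open MeasureTheory

theorem stmt_1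
    {Ω : Type*} [MeasurableSpace Ω] (μ : Measure Ω) [IsProbabilityMeasure μ]
    {X : Type*} [Fintype X]
    (θ ε : ℝ) (hε : 0 < ε)
    (F : X → Ω → ℝ) (hF : ∀ x, Measurable (F x))
    (pH pL pU rmin pmin pmax γ η : X → ℝ) (z w : X → Ω → ℝ)
    (hpH : ∀ x, pH x = (μ {ω | θ < F x ω}).toReal)
    (hpL : ∀ x, pL x = (μ {ω | F x ω ≤ θ}).toReal)
    (hpU : ∀ x, pU x = (μ {ω | θ - ε / 2 < F x ω ∧ F x ω ≤ θ + ε / 2}).toReal)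
    (hrmin : ∀ x, rmin x = min (pH x) (min (pL x) (1 - pU x)))
    (hz : ∀ x ω, z x ω = if θ < F x ω then 1 else 0)
    (hw : ∀ x ω, w x ω = if θ - ε / 2 < F x ω ∧ F x ω ≤ θ + ε / 2 then 1 else 0)
    (hpmin : ∀ x, pmin x = min (pH x) (pL x))
    (hpmax : ∀ x, pmax x = max (pH x) (pL x))
    (hγ : ∀ x, γ x = max (pmin x) (pU x))
    (hη : ∀ x, η x = if pmax x < pU x then 1 else 0) :
    1 - ∑ x, rmin x ≤
      (μ {ω | ∀ x, |z x ω - pH x| ≤ γ x ∧ η x ≤ w x ω}).toReal := by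
  classical
  have mH : ∀ x, MeasurableSet {ω | θ < F x ω} := fun x =>
    measurableSet_lt measurable_const (hF x)
  have mU : ∀ x, MeasurableSet {ω | θ - ε / 2 < F x ω ∧ F x ω ≤ θ + ε / 2} := fun x =>
    (measurableSet_lt measurable_const (hF x)).inter
      (measurableSet_le (hF x) measurable_const)
  have hcompl : ∀ s : Set Ω, MeasurableSet s → (μ sᶜ).toReal = 1 - (μ s).toReal := by
    intro s hs
    rw [measure_compl hs (measure_ne_top μ s), measure_univ,
      ENNReal.toReal_sub_of_le prob_le_one ENNReal.one_ne_top, ENNReal.toReal_one]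
  have hpL' : ∀ x, pL x = 1 - pH x := by
    intro x
    have hset : {ω | F x ω ≤ θ} = {ω | θ < F x ω}ᶜ := by ext ω; simp [not_lt]
    rw [hpL x, hset, hcompl _ (mH x), ← hpH x]
  have hHL : ∀ x, pH x + pL x = 1 := fun x => by rw [hpL' x]; ring
  have hpH0 : ∀ x, 0 ≤ pH x := fun x => (hpH x) ▸ ENNReal.toReal_nonneg
  have hpL0 : ∀ x, 0 ≤ pL x := fun x => (hpL x) ▸ ENNReal.toReal_nonneg
  have hpU0 : ∀ x, 0 ≤ pU x := fun x => (hpU x) ▸ ENNReal.toReal_nonneg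
  have hpU1 : ∀ x, pU x ≤ 1 := by
    intro x
    rw [hpU x]
    calc (μ {ω | θ - ε / 2 < F x ω ∧ F x ω ≤ θ + ε / 2}).toReal
        ≤ (μ Set.univ).toReal :=
          ENNReal.toReal_mono (measure_ne_top _ _) (measure_mono (Set.subset_univ _))
      _ = 1 := by rw [measure_univ, ENNReal.toReal_one]
  have hr0 : ∀ x, 0 ≤ rmin x := by
    intro x
    rw [hrmin x]
    exact le_min (hpH0 x) (le_min (hpL0 x) (by linarith [hpU1 x]))
  set Bad : X → Set Ω := fun x => {ω | ¬ (|z x ω - pH x| ≤ γ x ∧ η x ≤ w x ω)} with hBad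
  have key : ∀ x, μ (Bad x) ≤ ENNReal.ofReal (rmin x) := by
    intro x
    have step : ∀ T : Set Ω, Bad x ⊆ T → (μ T).toReal ≤ rmin x →
        μ (Bad x) ≤ ENNReal.ofReal (rmin x) := by
      intro T hsub hle
      calc μ (Bad x) ≤ μ T := measure_mono hsub
        _ = ENNReal.ofReal (μ T).toReal := (ENNReal.ofReal_toReal (measure_ne_top μ T)).symm
        _ ≤ ENNReal.ofReal (rmin x) := ENNReal.ofReal_le_ofReal hle
    have hγmin : pmin x ≤ γ x := (hγ x) ▸ le_max_left _ _
    have hγU : pU x ≤ γ x := (hγ x) ▸ le_max_right _ _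
    have habs1 : ∀ ω, θ < F x ω → |z x ω - pH x| = pL x := by
      intro ω hω
      rw [hz x ω, if_pos hω, abs_of_nonneg (by linarith [hHL x, hpL0 x])]
      linarith [hHL x]
    have habs0 : ∀ ω, ¬ θ < F x ω → |z x ω - pH x| = pH x := by
      intro ω hω
      rw [hz x ω, if_neg hω, zero_sub, abs_neg, abs_of_nonneg (hpH0 x)]
    by_cases hc : pmax x < pU x
    · -- η = 1 case
      have hη1 : η x = 1 := by rw [hη x, if_pos hc]
      have huA : pH x < pU x := lt_of_le_of_lt ((hpmax x) ▸ le_max_left _ _) hc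
      have huB : pL x < pU x := lt_of_le_of_lt ((hpmax x) ▸ le_max_right _ _) hc
      apply step {ω | θ - ε / 2 < F x ω ∧ F x ω ≤ θ + ε / 2}ᶜ
      · intro ω hω
        simp only [hBad, Set.mem_setOf_eq] at hω
        by_contra hmem
        simp only [Set.mem_compl_iff, Set.mem_setOf_eq, not_not] at hmem
        apply hω
        refine ⟨?_, by rw [hw x ω, if_pos hmem, hη1]⟩
        by_cases hzc : θ < F x ω
        · rw [habs1 ω hzc]; linarith
        · rw [habs0 ω hzc]; linarith
      · rw [hcompl _ (mU x), ← hpU x, hrmin x]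
        exact le_min (by linarith [hHL x]) (le_min (by linarith [hHL x]) le_rfl)
    · -- η = 0 case
      have hwcond : ∀ ω, η x ≤ w x ω := by
        intro ω
        rw [hη x, if_neg hc, hw x ω]
        split <;> norm_num
      by_cases h1 : pL x ≤ γ x
      · by_cases h2 : pH x ≤ γ x
        · apply step ∅
          · intro ω hω
            exfalso
            apply hω
            refine ⟨?_, hwcond ω⟩
            by_cases hzc : θ < F x ω
            · rw [habs1 ω hzc]; exact h1
            · rw [habs0 ω hzc]; exact h2
          · simpa using hr0 x
        · -- pH x > γ x, so pU ≤ γ < pH, pL ≤ γ < pH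
          push_neg at h2
          apply step {ω | θ < F x ω}ᶜ
          · intro ω hω
            simp only [hBad, Set.mem_setOf_eq] at hω
            simp only [Set.mem_compl_iff, Set.mem_setOf_eq]
            intro hzc
            exact hω ⟨by rw [habs1 ω hzc]; exact h1, hwcond ω⟩
          · rw [hcompl _ (mH x), ← hpH x, hrmin x, hpL' x]
            refine le_min (by linarith [hpL' x]) (le_min le_rfl (by linarith [hpL' x]))
      · -- pL x > γ x, hence pH x ≤ γ x
        push_neg at h1
        have h2 : pH x ≤ γ x := by
          rcases min_le_iff.mp ((hpmin x) ▸ hγmin : min (pH x) (pL x) ≤ γ x) with h | h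
          · exact h
          · linarith
        apply step {ω | θ < F x ω}
        · intro ω hω
          simp only [hBad, Set.mem_setOf_eq] at hω
          simp only [Set.mem_setOf_eq]
          by_contra hzc
          exact hω ⟨by rw [habs0 ω hzc]; exact h2, hwcond ω⟩
        · rw [← hpH x, hrmin x]
          refine le_min le_rfl (le_min (by linarith) (by linarith [hHL x]))
  set G : Set Ω := {ω | ∀ x, |z x ω - pH x| ≤ γ x ∧ η x ≤ w x ω} with hG
  have hGc : Gᶜ ⊆ ⋃ x, Bad x := by
    intro ω hω
    simp only [hG, Set.mem_compl_iff, Set.mem_setOf_eq, not_forall] at hω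
    obtain ⟨x, hx⟩ := hω
    exact Set.mem_iUnion.mpr ⟨x, hx⟩
  have hμGc : (μ Gᶜ).toReal ≤ ∑ x, rmin x := by
    have h1 : μ Gᶜ ≤ ENNReal.ofReal (∑ x, rmin x) := by
      calc μ Gᶜ ≤ μ (⋃ x, Bad x) := measure_mono hGc
        _ ≤ ∑' x, μ (Bad x) := measure_iUnion_le _
        _ = ∑ x, μ (Bad x) := tsum_fintype _
        _ ≤ ∑ x, ENNReal.ofReal (rmin x) := Finset.sum_le_sum (fun x _ => key x)
        _ = ENNReal.ofReal (∑ x, rmin x) :=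
            (ENNReal.ofReal_sum_of_nonneg (fun x _ => hr0 x)).symm
    exact ENNReal.toReal_le_of_le_ofReal (Finset.sum_nonneg fun x _ => hr0 x) h1
  have hsplit : 1 ≤ (μ G).toReal + (μ Gᶜ).toReal := by
    have h := measure_union_le (μ := μ) G Gᶜ
    rw [Set.union_compl_self, measure_univ] at h
    have h2 := ENNReal.toReal_mono
      (ENNReal.add_ne_top.mpr ⟨measure_ne_top μ G, measure_ne_top μ Gᶜ⟩) h
    rwa [ENNReal.toReal_one, ENNReal.toReal_add (measure_ne_top μ G) (measure_ne_top μ Gᶜ)] at h2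
  linarith
end

section
/- Suppose β ∈ ℝ satisfies Φ(β) > 1/2, and suppose X is partitioned into pairwise disjoint sets H̃ = {x ∈ X | m(x) − β·σ(x) > θ}, L̃ = {x ∈ X | m(x) + β·σ(x) < θ}, and Ũ = X \ (H̃ ∪ L̃). Suppose further that for every x ∈ X there is ε(x) > 0 with μ{ω | θ − ε(x)/2 < F x ω ≤ θ + ε(x)/2} = Φ(β). Let r̃^min(x) = min{pH(x), pL(x), 1 − Φ(β)}. Then μ{ω | F x ω > θ for all x ∈ H̃, F x ω ≤ θ for all x ∈ L̃, and θ − ε(x)/2 < F x ω ≤ θ + ε(x)/2 for all x ∈ Ũ} ≥ 1 − Σ_{x ∈ X} r̃^min(x). -/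
/-!
Union bound. Each coordinate `x` fails its event with probability at most `r̃^min(x)`: writing
`z = (θ - m x) / σ x`, we have `pL x = Φ z` and `pH x = 1 - Φ z`. For `x ∈ H̃` we have `z < -β`,
so the failure probability `pL x` is at most `Φ (-β) = 1 - Φ β < 1 / 2 < pH x`; `x ∈ L̃` is
symmetric; for `x ∈ Ũ` the failure probability is exactly `1 - Φ β`, and `|z| ≤ β` makes both
`pL x` and `pH x` at least `1 - Φ β`.
-/

open MeasureTheory ProbabilityTheory

namespace ProbabilityTheory

lemma gaussianReal_map_const_mul_add (a b : ℝ) :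
    (gaussianReal 0 1).map (fun x ↦ a * x + b) = gaussianReal b (a ^ 2).toNNReal := by
  have h : (fun x ↦ a * x + b) = (· + b) ∘ (a * ·) := rfl
  rw [h, ← Measure.map_map (by fun_prop) (by fun_prop), gaussianReal_map_const_mul,
    gaussianReal_map_add_const, mul_zero, zero_add, mul_one, Real.toNNReal_of_nonneg (sq_nonneg a)]

lemma cdf_gaussianReal {σ : ℝ} (m : ℝ) (hσ : 0 < σ) (t : ℝ) :
    cdf (gaussianReal m (σ ^ 2).toNNReal) t = cdf (gaussianReal 0 1) ((t - m) / σ) := by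
  rw [cdf_eq_real, cdf_eq_real, ← gaussianReal_map_const_mul_add,
    map_measureReal_apply (by fun_prop) measurableSet_Iic]
  congr 1
  ext x
  simp [le_div_iff₀ hσ, le_sub_iff_add_le, mul_comm]

lemma cdf_gaussianReal_zero_one_neg (t : ℝ) :
    cdf (gaussianReal 0 1) (-t) = 1 - cdf (gaussianReal 0 1) t := by
  have hsymm : (gaussianReal 0 1).map (fun x ↦ -x) = gaussianReal 0 1 := by
    rw [gaussianReal_map_neg, neg_zero]
  have hatom : gaussianReal 0 1 {-t} = 0 :=
    gaussianReal_absolutelyContinuous 0 one_ne_zero Real.volume_singleton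
  calc cdf (gaussianReal 0 1) (-t) = (gaussianReal 0 1).real (Set.Iio (-t)) := by
        rw [cdf_eq_real, measureReal_congr (Iio_ae_eq_Iic' hatom).symm]
    _ = (gaussianReal 0 1).real (Set.Ioi t) := by
        rw [← hsymm, map_measureReal_apply (by fun_prop) measurableSet_Ioi]
        congr 1
        ext x
        simp
    _ = 1 - cdf (gaussianReal 0 1) t := by
        rw [cdf_eq_real, ← Set.compl_Iic, probReal_compl_eq_one_sub measurableSet_Iic]

lemma cdf_gaussianReal_zero_one_zero : cdf (gaussianReal 0 1) 0 = 1 / 2 := by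
  have h := cdf_gaussianReal_zero_one_neg 0
  rw [neg_zero] at h
  linarith

lemma pos_of_half_lt_cdf_gaussianReal {β : ℝ} (hβ : 1 / 2 < cdf (gaussianReal 0 1) β) :
    0 < β := by
  by_contra! h
  linarith [monotone_cdf (gaussianReal 0 1) h, cdf_gaussianReal_zero_one_zero]

section ClassificationEvent

variable {Ω : Type*}

/-- The event required of `F x` in the theorem, with `x ∈ H̃`, `x ∈ L̃`, `x ∈ Ũ` unfolded into
their defining inequalities. -/
def classificationEvent (Y : Ω → ℝ) (m σ β θ δ : ℝ) : Set Ω :=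
  {ω | (θ < m - β * σ → θ < Y ω) ∧ (m + β * σ < θ → Y ω ≤ θ) ∧
    (m - β * σ ≤ θ → θ ≤ m + β * σ → θ - δ < Y ω ∧ Y ω ≤ θ + δ)}

variable {Y : Ω → ℝ} {m σ β θ δ : ℝ}

lemma classificationEvent_of_lt_sub (hβσ : 0 ≤ β * σ) (h : θ < m - β * σ) :
    classificationEvent Y m σ β θ δ = {ω | θ < Y ω} := by
  ext ω
  simp [classificationEvent, h, h.not_ge, (show ¬ m + β * σ < θ by linarith)]

lemma classificationEvent_of_add_lt (hβσ : 0 ≤ β * σ) (h : m + β * σ < θ) :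
    classificationEvent Y m σ β θ δ = {ω | Y ω ≤ θ} := by
  ext ω
  simp [classificationEvent, h, h.not_ge, (show ¬ θ < m - β * σ by linarith)]

lemma classificationEvent_of_mem_Icc (h₁ : m - β * σ ≤ θ) (h₂ : θ ≤ m + β * σ) :
    classificationEvent Y m σ β θ δ = {ω | θ - δ < Y ω ∧ Y ω ≤ θ + δ} := by
  ext ω
  simp [classificationEvent, h₁, h₂, h₁.not_gt, h₂.not_gt]

variable [MeasurableSpace Ω] {μ : Measure Ω}

lemma measurableSet_classificationEvent (hY : Measurable Y) :
    MeasurableSet (classificationEvent Y m σ β θ δ) := by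
  unfold classificationEvent
  measurability

lemma HasLaw.measureReal_le_eq_cdf (hY : HasLaw Y (gaussianReal m (σ ^ 2).toNNReal) μ)
    (hσ : 0 < σ) (θ : ℝ) :
    μ.real {ω | Y ω ≤ θ} = cdf (gaussianReal 0 1) ((θ - m) / σ) := by
  rw [hY.measureReal_eq measurableSet_Iic, ← cdf_gaussianReal m hσ, cdf_eq_real]
  rfl

lemma HasLaw.measureReal_lt_eq_one_sub_cdf (hY : HasLaw Y (gaussianReal m (σ ^ 2).toNNReal) μ)
    (hσ : 0 < σ) (θ : ℝ) :
    μ.real {ω | θ < Y ω} = 1 - cdf (gaussianReal 0 1) ((θ - m) / σ) := by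
  rw [hY.measureReal_eq measurableSet_Ioi, ← cdf_gaussianReal m hσ, cdf_eq_real,
    ← probReal_compl_eq_one_sub measurableSet_Iic, Set.compl_Iic]
  rfl

lemma measureReal_compl_classificationEvent_le (hY : Measurable Y)
    (hlaw : μ.map Y = gaussianReal m (σ ^ 2).toNNReal) (hσ : 0 < σ)
    (hβ : 1 / 2 < cdf (gaussianReal 0 1) β)
    (hδ : μ.real {ω | θ - δ < Y ω ∧ Y ω ≤ θ + δ} = cdf (gaussianReal 0 1) β) :
    μ.real (classificationEvent Y m σ β θ δ)ᶜ ≤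
      min (μ.real {ω | θ < Y ω}) (min (μ.real {ω | Y ω ≤ θ}) (1 - cdf (gaussianReal 0 1) β)) := by
  have hY' : HasLaw Y (gaussianReal m (σ ^ 2).toNNReal) μ := ⟨hY.aemeasurable, hlaw⟩
  have := hY'.isProbabilityMeasure
  have hβσ : 0 ≤ β * σ := mul_nonneg (pos_of_half_lt_cdf_gaussianReal hβ).le hσ.le
  have hsymm := cdf_gaussianReal_zero_one_neg β
  rw [hY'.measureReal_lt_eq_one_sub_cdf hσ, hY'.measureReal_le_eq_cdf hσ, le_min_iff, le_min_iff]
  rcases lt_or_ge θ (m - β * σ) with hH | hH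
  · rw [classificationEvent_of_lt_sub hβσ hH, Set.compl_ofPred]
    simp only [not_lt]
    rw [hY'.measureReal_le_eq_cdf hσ]
    have := monotone_cdf (gaussianReal 0 1) ((div_le_iff₀ hσ).2 (by linarith) : (θ - m) / σ ≤ -β)
    exact ⟨by linarith, le_rfl, by linarith⟩
  rcases lt_or_ge (m + β * σ) θ with hL | hL
  · rw [classificationEvent_of_add_lt hβσ hL, Set.compl_ofPred]
    simp only [not_le]
    rw [hY'.measureReal_lt_eq_one_sub_cdf hσ]
    have := monotone_cdf (gaussianReal 0 1) ((le_div_iff₀ hσ).2 (by linarith) : β ≤ (θ - m) / σ)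
    exact ⟨le_rfl, by linarith, by linarith⟩
  · rw [probReal_compl_eq_one_sub (measurableSet_classificationEvent hY),
      classificationEvent_of_mem_Icc hH hL, hδ]
    have h₁ := monotone_cdf (gaussianReal 0 1) ((le_div_iff₀ hσ).2 (by linarith) : -β ≤ (θ - m) / σ)
    have h₂ := monotone_cdf (gaussianReal 0 1) ((div_le_iff₀ hσ).2 (by linarith) : (θ - m) / σ ≤ β)
    exact ⟨by linarith, by linarith, le_rfl⟩

end ClassificationEvent

end ProbabilityTheory

namespace MeasureTheory

lemma one_sub_sum_measureReal_compl_le_measureReal_iInter {Ω ι : Type*} [MeasurableSpace Ω]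
    {μ : Measure Ω} [IsProbabilityMeasure μ] [Fintype ι] {A : ι → Set Ω}
    (hA : ∀ i, MeasurableSet (A i)) :
    1 - ∑ i, μ.real (A i)ᶜ ≤ μ.real (⋂ i, A i) := by
  have h := measureReal_iUnion_fintype_le (μ := μ) fun i ↦ (A i)ᶜ
  rw [← Set.compl_iInter, probReal_compl_eq_one_sub (MeasurableSet.iInter hA)] at h
  linarith

end MeasureTheory

theorem stmt_5_general
    {Ω : Type*} [MeasurableSpace Ω] (μ : Measure Ω) [IsProbabilityMeasure μ]
    {X : Type*} [Fintype X]
    (θ : ℝ)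
    (m σ : X → ℝ) (hσ : ∀ x, 0 < σ x)
    (F : X → Ω → ℝ) (hF : ∀ x, Measurable (F x))
    (hlaw : ∀ x, μ.map (F x) = gaussianReal (m x) (Real.toNNReal ((σ x) ^ 2)))
    (Φ : ℝ → ℝ) (hΦ : ∀ t, Φ t = cdf (gaussianReal 0 1) t)
    (β : ℝ) (hβ : 1 / 2 < Φ β)
    (pH pL rtmin : X → ℝ)
    (hpH : ∀ x, pH x = (μ {ω | θ < F x ω}).toReal)
    (hpL : ∀ x, pL x = (μ {ω | F x ω ≤ θ}).toReal)
    (hrtmin : ∀ x, rtmin x = min (pH x) (min (pL x) (1 - Φ β)))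
    (H L U : Finset X)
    (hH : ∀ x, x ∈ H ↔ θ < m x - β * σ x)
    (hL : ∀ x, x ∈ L ↔ m x + β * σ x < θ)
    (hU : ∀ x, x ∈ U ↔ x ∉ H ∧ x ∉ L)
    (ε : X → ℝ)
    (hεΦ : ∀ x, (μ {ω | θ - ε x / 2 < F x ω ∧ F x ω ≤ θ + ε x / 2}).toReal = Φ β) :
    1 - ∑ x, rtmin x ≤
      (μ {ω | (∀ x ∈ H, θ < F x ω) ∧ (∀ x ∈ L, F x ω ≤ θ) ∧
              (∀ x ∈ U, θ - ε x / 2 < F x ω ∧ F x ω ≤ θ + ε x / 2)}).toReal := by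
  obtain rfl : Φ = cdf (gaussianReal 0 1) := funext hΦ
  have hevent : {ω | (∀ x ∈ H, θ < F x ω) ∧ (∀ x ∈ L, F x ω ≤ θ) ∧
      (∀ x ∈ U, θ - ε x / 2 < F x ω ∧ F x ω ≤ θ + ε x / 2)} =
      ⋂ x, classificationEvent (F x) (m x) (σ x) β θ (ε x / 2) := by
    ext ω
    simp only [Set.mem_iInter, classificationEvent, Set.mem_ofPred_eq, hH, hL, hU, not_lt,
      and_imp, forall_and]
  rw [hevent]
  calc 1 - ∑ x, rtmin x
      ≤ 1 - ∑ x, μ.real (classificationEvent (F x) (m x) (σ x) β θ (ε x / 2))ᶜ := by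
        gcongr with x
        rw [hrtmin, hpH, hpL]
        exact measureReal_compl_classificationEvent_le (hF x) (hlaw x) (hσ x) hβ (hεΦ x)
    _ ≤ _ := one_sub_sum_measureReal_compl_le_measureReal_iInter fun x ↦
        measurableSet_classificationEvent (hF x)

theorem stmt_5
    {Ω : Type*} [MeasurableSpace Ω] (μ : Measure Ω) [IsProbabilityMeasure μ]
    {X : Type*} [Fintype X]
    (θ : ℝ)
    (m σ : X → ℝ) (hσ : ∀ x, 0 < σ x)
    (F : X → Ω → ℝ) (hF : ∀ x, Measurable (F x))
    (hlaw : ∀ x, μ.map (F x) = gaussianReal (m x) (Real.toNNReal ((σ x) ^ 2)))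
    (Φ : ℝ → ℝ) (hΦ : ∀ t, Φ t = cdf (gaussianReal 0 1) t)
    (β : ℝ) (hβ : 1 / 2 < Φ β)
    (pH pL rtmin : X → ℝ)
    (hpH : ∀ x, pH x = (μ {ω | θ < F x ω}).toReal)
    (hpL : ∀ x, pL x = (μ {ω | F x ω ≤ θ}).toReal)
    (hrtmin : ∀ x, rtmin x = min (pH x) (min (pL x) (1 - Φ β)))
    (H L U : Finset X)
    (hH : ∀ x, x ∈ H ↔ θ < m x - β * σ x)
    (hL : ∀ x, x ∈ L ↔ m x + β * σ x < θ)
    (hU : ∀ x, x ∈ U ↔ x ∉ H ∧ x ∉ L)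
    (ε : X → ℝ) (hε : ∀ x, 0 < ε x)
    (hεΦ : ∀ x, (μ {ω | θ - ε x / 2 < F x ω ∧ F x ω ≤ θ + ε x / 2}).toReal = Φ β) :
    1 - ∑ x, rtmin x ≤
      (μ {ω | (∀ x ∈ H, θ < F x ω) ∧ (∀ x ∈ L, F x ω ≤ θ) ∧
              (∀ x ∈ U, θ - ε x / 2 < F x ω ∧ F x ω ≤ θ + ε x / 2)}).toReal :=
  stmt_5_general μ θ m σ hσ F hF hlaw Φ hΦ β hβ pH pL rtmin hpH hpL hrtmin H L U hH hL hU ε hεΦ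
end

section
/- Suppose X is partitioned into pairwise disjoint sets H̃, L̃, Ũ with H̃ ∪ L̃ ∪ Ũ = X such that pH(x) = r^max(x) for all x ∈ H̃, pL(x) = r^max(x) for all x ∈ L̃, pU(x) = r^max(x) for all x ∈ Ũ, and H̃ is nonempty. Then with probability at least 1 − Σ_{x ∈ X} r^min(x) over ω (i.e. on an event of μ-measure at least this bound), the following holds: for every pred : X → Bool with pred x = true for all x ∈ H̃ and pred x = false for all x ∈ L̃, the F-score satisfies 2·TP / (2·TP + FP + FN) ≥ 2·|H̃| / (2·|H̃| + |Ũ|). -/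
/-!
On the event that every `x ∈ H` lies above the threshold and every `x ∈ L` at or below it, any
prediction that is `true` on `H` and `false` on `L` has at least `|H|` true positives, and all its
false positives and false negatives lie in `U`; since `t / (t + f)` increases in `t` and decreases
in `f`, the F-score is then at least `2|H| / (2|H| + |U|)`. By the union bound this event fails
with probability at most `∑_{x ∈ H} pL x + ∑_{x ∈ L} pH x`, and the `max` hypotheses say exactly
that each of these terms is the smallest of `pH x, pL x, 1 - pU x` (using `pH x + pL x = 1`).
-/

open MeasureTheory

lemma div_add_le_div_add {a b f u : ℝ} (ha : 0 ≤ a) (hab : a ≤ b) (hf : 0 ≤ f) (hfu : f ≤ u) :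
    a / (a + u) ≤ b / (b + f) := by
  rcases ha.eq_or_lt with rfl | ha
  · simp only [zero_div]
    positivity
  rw [div_le_div_iff₀ (by linarith) (by linarith)]
  nlinarith

lemma le_min_min_one_sub {a b c : ℝ} (hab : a + b = 1) (hmax : max a (max b c) = a) :
    b ≤ min a (min b (1 - c)) := by
  obtain ⟨hb, hc⟩ := max_le_iff.mp (max_eq_left_iff.mp hmax)
  exact le_min hb (le_min le_rfl (by linarith))

section Separation

variable {X : Type*} {f : X → ℝ} {θ : ℝ} {pred : X → Bool} {H L U : Finset X}

lemma card_le_ncard_truePos [Finite X] (hH : ∀ x ∈ H, θ < f x)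
    (hpredH : ∀ x ∈ H, pred x = true) : H.card ≤ {x | pred x = true ∧ θ < f x}.ncard := by
  rw [← Set.ncard_coe_finset]
  exact Set.ncard_le_ncard fun x hx ↦ ⟨hpredH x hx, hH x hx⟩

lemma ncard_falsePos_add_ncard_falseNeg_le (hcover : ∀ x ∉ H, x ∉ L → x ∈ U)
    (hH : ∀ x ∈ H, θ < f x) (hL : ∀ x ∈ L, f x ≤ θ)
    (hpredH : ∀ x ∈ H, pred x = true) (hpredL : ∀ x ∈ L, pred x = false) :
    {x | pred x = true ∧ f x ≤ θ}.ncard + {x | pred x = false ∧ θ < f x}.ncard ≤ U.card := by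
  have hdisj : Disjoint {x | pred x = true ∧ f x ≤ θ} {x | pred x = false ∧ θ < f x} :=
    Set.disjoint_left.mpr fun x hx hx' ↦ by simp [hx.1] at hx'
  have hsub : {x | pred x = true ∧ f x ≤ θ} ∪ {x | pred x = false ∧ θ < f x} ⊆ U := by
    rintro x (⟨hp, hle⟩ | ⟨hp, hgt⟩)
    · exact hcover x (fun hx ↦ (hH x hx).not_ge hle) (fun hx ↦ by simp [hpredL x hx] at hp)
    · exact hcover x (fun hx ↦ by simp [hpredH x hx] at hp) (fun hx ↦ (hL x hx).not_gt hgt)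
  have hfin := U.finite_toSet.subset hsub
  rw [← Set.ncard_union_eq hdisj (hfin.subset Set.subset_union_left)
    (hfin.subset Set.subset_union_right), ← Set.ncard_coe_finset]
  exact Set.ncard_le_ncard hsub

lemma fScore_ge_of_separates [Finite X] (hcover : ∀ x ∉ H, x ∉ L → x ∈ U)
    (hH : ∀ x ∈ H, θ < f x) (hL : ∀ x ∈ L, f x ≤ θ)
    (hpredH : ∀ x ∈ H, pred x = true) (hpredL : ∀ x ∈ L, pred x = false) :
    2 * (H.card : ℝ) / (2 * (H.card : ℝ) + (U.card : ℝ)) ≤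
      2 * ({x | pred x = true ∧ θ < f x}.ncard : ℝ) /
        (2 * ({x | pred x = true ∧ θ < f x}.ncard : ℝ) +
          ({x | pred x = true ∧ f x ≤ θ}.ncard : ℝ) +
          ({x | pred x = false ∧ θ < f x}.ncard : ℝ)) := by
  have htp : (H.card : ℝ) ≤ {x | pred x = true ∧ θ < f x}.ncard := by
    exact_mod_cast card_le_ncard_truePos hH hpredH
  have herr : ({x | pred x = true ∧ f x ≤ θ}.ncard : ℝ) +
      {x | pred x = false ∧ θ < f x}.ncard ≤ U.card := by
    exact_mod_cast ncard_falsePos_add_ncard_falseNeg_le hcover hH hL hpredH hpredL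
  rw [add_assoc]
  exact div_add_le_div_add (by positivity) (by linarith) (by positivity) herr

end Separation

section Probability

variable {Ω : Type*} [MeasurableSpace Ω] {μ : Measure Ω}

lemma measureReal_not_separates_le {X : Type*} [IsFiniteMeasure μ] (F : X → Ω → ℝ) (θ : ℝ)
    (H L : Finset X) :
    μ.real {ω | (∀ x ∈ H, θ < F x ω) ∧ ∀ x ∈ L, F x ω ≤ θ}ᶜ ≤
      ∑ x ∈ H, μ.real {ω | F x ω ≤ θ} + ∑ x ∈ L, μ.real {ω | θ < F x ω} := by
  have hsub : {ω | (∀ x ∈ H, θ < F x ω) ∧ ∀ x ∈ L, F x ω ≤ θ}ᶜ ⊆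
      (⋃ x ∈ H, {ω | F x ω ≤ θ}) ∪ ⋃ x ∈ L, {ω | θ < F x ω} := by
    intro ω hω
    simp only [Set.mem_compl_iff, Set.mem_ofPred_eq, not_and_or, not_forall, not_lt,
      not_le, exists_prop] at hω
    simpa only [Set.mem_union, Set.mem_iUnion, Set.mem_ofPred_eq, exists_prop] using hω
  calc _ ≤ μ.real ((⋃ x ∈ H, {ω | F x ω ≤ θ}) ∪ ⋃ x ∈ L, {ω | θ < F x ω}) :=
        measureReal_mono hsub
    _ ≤ _ := (measureReal_union_le _ _).trans
        (add_le_add (measureReal_biUnion_finset_le _ _) (measureReal_biUnion_finset_le _ _))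

lemma one_sub_probReal_compl_le [IsProbabilityMeasure μ] (s : Set Ω) :
    1 - μ.real sᶜ ≤ μ.real s := by
  have := measureReal_union_le (μ := μ) s sᶜ
  rw [Set.union_compl_self, probReal_univ] at this
  linarith

lemma probReal_lt_add_probReal_le [IsProbabilityMeasure μ] {g : Ω → ℝ} (hg : Measurable g)
    (θ : ℝ) :
    μ.real {ω | θ < g ω} + μ.real {ω | g ω ≤ θ} = 1 := by
  rw [← probReal_add_probReal_compl (μ := μ) (measurableSet_lt (measurable_const (a := θ)) hg),
    Set.compl_ofPred]
  simp only [not_lt]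

end Probability

lemma sum_add_sum_le_sum_of_disjoint {ι : Type*} [Fintype ι] [DecidableEq ι] {s t : Finset ι}
    (hst : Disjoint s t) {f g r : ι → ℝ} (hr : ∀ i, 0 ≤ r i) (hf : ∀ i ∈ s, f i ≤ r i)
    (hg : ∀ i ∈ t, g i ≤ r i) : ∑ i ∈ s, f i + ∑ i ∈ t, g i ≤ ∑ i, r i :=
  calc ∑ i ∈ s, f i + ∑ i ∈ t, g i ≤ ∑ i ∈ s, r i + ∑ i ∈ t, r i :=
        add_le_add (Finset.sum_le_sum hf) (Finset.sum_le_sum hg)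
    _ = ∑ i ∈ s ∪ t, r i := (Finset.sum_union hst).symm
    _ ≤ ∑ i, r i := Finset.sum_le_univ_sum_of_nonneg hr

theorem stmt_6_general
    {Ω : Type*} [MeasurableSpace Ω] (μ : Measure Ω) [IsProbabilityMeasure μ]
    {X : Type*} [Fintype X] [DecidableEq X]
    (θ ε : ℝ)
    (F : X → Ω → ℝ) (hF : ∀ x, Measurable (F x))
    (pH pL pU rmin rmax : X → ℝ)
    (hpH : ∀ x, pH x = (μ {ω | θ < F x ω}).toReal)
    (hpL : ∀ x, pL x = (μ {ω | F x ω ≤ θ}).toReal)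
    (hpU : ∀ x, pU x = (μ {ω | θ - ε / 2 < F x ω ∧ F x ω ≤ θ + ε / 2}).toReal)
    (hrmin : ∀ x, rmin x = min (pH x) (min (pL x) (1 - pU x)))
    (hrmax : ∀ x, rmax x = max (pH x) (max (pL x) (pU x)))
    (H L U : Finset X)
    (hHL : Disjoint H L)
    (hunion : H ∪ L ∪ U = Finset.univ)
    (hH : ∀ x ∈ H, pH x = rmax x)
    (hL : ∀ x ∈ L, pL x = rmax x) :
    1 - ∑ x, rmin x ≤
      (μ {ω | ∀ pred : X → Bool,
          (∀ x ∈ H, pred x = true) → (∀ x ∈ L, pred x = false) →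
          2 * (H.card : ℝ) / (2 * (H.card : ℝ) + (U.card : ℝ)) ≤ 2 * (({x | pred x = true ∧ θ < F x ω}.ncard : ℝ)) / (2 * (({x | pred x = true ∧ θ < F x ω}.ncard : ℝ)) + (({x | pred x = true ∧ F x ω ≤ θ}.ncard : ℝ)) + (({x | pred x = false ∧ θ < F x ω}.ncard : ℝ)))}).toReal := by
  have hcover : ∀ x ∉ H, x ∉ L → x ∈ U := fun x hxH hxL ↦ by
    have hx := Finset.mem_univ x
    rw [← hunion] at hx
    simpa [hxH, hxL] using hx
  have hsum : ∀ x, pH x + pL x = 1 := fun x ↦ by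
    rw [hpH, hpL]
    exact probReal_lt_add_probReal_le (hF x) θ
  have hrmin_nonneg : ∀ x, 0 ≤ rmin x := fun x ↦ by
    rw [hrmin, hpH, hpL, hpU]
    exact le_min measureReal_nonneg
      (le_min measureReal_nonneg (sub_nonneg.mpr measureReal_le_one))
  have hrminH : ∀ x ∈ H, pL x ≤ rmin x := fun x hx ↦ by
    rw [hrmin]
    exact le_min_min_one_sub (hsum x) ((hrmax x).symm.trans (hH x hx).symm)
  have hrminL : ∀ x ∈ L, pH x ≤ rmin x := fun x hx ↦ by
    rw [hrmin, min_left_comm]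
    exact le_min_min_one_sub ((add_comm _ _).trans (hsum x))
      (by rw [max_left_comm, ← hrmax, hL x hx])
  set A := {ω | (∀ x ∈ H, θ < F x ω) ∧ ∀ x ∈ L, F x ω ≤ θ}
  calc 1 - ∑ x, rmin x ≤ 1 - (∑ x ∈ H, pL x + ∑ x ∈ L, pH x) := by
        gcongr
        exact sum_add_sum_le_sum_of_disjoint hHL hrmin_nonneg hrminH hrminL
    _ ≤ 1 - μ.real Aᶜ := by
        simp only [hpH, hpL, ← measureReal_def]
        gcongr
        exact measureReal_not_separates_le F θ H L
    _ ≤ μ.real A := one_sub_probReal_compl_le A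
    _ ≤ _ := by
        refine measureReal_mono fun ω hω pred hpredH hpredL ↦ ?_
        exact fScore_ge_of_separates hcover hω.1 hω.2 hpredH hpredL

theorem stmt_6
    {Ω : Type*} [MeasurableSpace Ω] (μ : Measure Ω) [IsProbabilityMeasure μ]
    {X : Type*} [Fintype X] [DecidableEq X]
    (θ ε : ℝ) (hε : 0 < ε)
    (F : X → Ω → ℝ) (hF : ∀ x, Measurable (F x))
    (pH pL pU rmin rmax : X → ℝ)
    (hpH : ∀ x, pH x = (μ {ω | θ < F x ω}).toReal)
    (hpL : ∀ x, pL x = (μ {ω | F x ω ≤ θ}).toReal)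
    (hpU : ∀ x, pU x = (μ {ω | θ - ε / 2 < F x ω ∧ F x ω ≤ θ + ε / 2}).toReal)
    (hrmin : ∀ x, rmin x = min (pH x) (min (pL x) (1 - pU x)))
    (hrmax : ∀ x, rmax x = max (pH x) (max (pL x) (pU x)))
    (H L U : Finset X)
    (hHL : Disjoint H L) (hHU : Disjoint H U) (hLU : Disjoint L U)
    (hunion : H ∪ L ∪ U = Finset.univ)
    (hH : ∀ x ∈ H, pH x = rmax x)
    (hL : ∀ x ∈ L, pL x = rmax x)
    (hU : ∀ x ∈ U, pU x = rmax x)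
    (hne : H.Nonempty) :
    1 - ∑ x, rmin x ≤
      (μ {ω | ∀ pred : X → Bool,
          (∀ x ∈ H, pred x = true) → (∀ x ∈ L, pred x = false) →
          2 * (H.card : ℝ) / (2 * (H.card : ℝ) + (U.card : ℝ)) ≤ 2 * (({x | pred x = true ∧ θ < F x ω}.ncard : ℝ)) / (2 * (({x | pred x = true ∧ θ < F x ω}.ncard : ℝ)) + (({x | pred x = true ∧ F x ω ≤ θ}.ncard : ℝ)) + (({x | pred x = false ∧ θ < F x ω}.ncard : ℝ)))}).toReal :=
  stmt_6_general μ θ ε F hF pH pL pU rmin rmax hpH hpL hpU hrmin hrmax H L U hHL hunion hH hL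
end

section
/- Suppose X is partitioned into pairwise disjoint sets H̃, L̃, Ũ with H̃ ∪ L̃ ∪ Ũ = X such that pH(x) = r^max(x) for all x ∈ H̃, pL(x) = r^max(x) for all x ∈ L̃, pU(x) = r^max(x) for all x ∈ Ũ, and H̃ is nonempty. Then with probability at least 1 − Σ_{x ∈ X} r^min(x) over ω, the following holds: for every pred : X → Bool with pred x = true for all x ∈ H̃ and pred x = false for all x ∈ L̃, the precision satisfies TP / (TP + FP) ≥ |H̃| / (|H̃| + |Ũ|). -/
open MeasureTheory

theorem stmt_8
    {Ω : Type*} [MeasurableSpace Ω] (μ : Measure Ω) [IsProbabilityMeasure μ]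
    {X : Type*} [Fintype X] [DecidableEq X]
    (θ ε : ℝ) (hε : 0 < ε)
    (F : X → Ω → ℝ) (hF : ∀ x, Measurable (F x))
    (pH pL pU rmin rmax : X → ℝ)
    (hpH : ∀ x, pH x = (μ {ω | θ < F x ω}).toReal)
    (hpL : ∀ x, pL x = (μ {ω | F x ω ≤ θ}).toReal)
    (hpU : ∀ x, pU x = (μ {ω | θ - ε / 2 < F x ω ∧ F x ω ≤ θ + ε / 2}).toReal)
    (hrmin : ∀ x, rmin x = min (pH x) (min (pL x) (1 - pU x)))
    (hrmax : ∀ x, rmax x = max (pH x) (max (pL x) (pU x)))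
    (H L U : Finset X)
    (hHL : Disjoint H L) (hHU : Disjoint H U) (hLU : Disjoint L U)
    (hunion : H ∪ L ∪ U = Finset.univ)
    (hH : ∀ x ∈ H, pH x = rmax x)
    (hL : ∀ x ∈ L, pL x = rmax x)
    (hU : ∀ x ∈ U, pU x = rmax x)
    (hne : H.Nonempty) :
    1 - ∑ x, rmin x ≤
      (μ {ω | ∀ pred : X → Bool,
          (∀ x ∈ H, pred x = true) → (∀ x ∈ L, pred x = false) →
          (H.card : ℝ) / ((H.card : ℝ) + (U.card : ℝ)) ≤ (({x | pred x = true ∧ θ < F x ω}.ncard : ℝ)) / ((({x | pred x = true ∧ θ < F x ω}.ncard : ℝ)) + (({x | pred x = true ∧ F x ω ≤ θ}.ncard : ℝ)))}).toReal := by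
  classical
  set S : Set Ω := {ω | ∀ pred : X → Bool,
          (∀ x ∈ H, pred x = true) → (∀ x ∈ L, pred x = false) →
          (H.card : ℝ) / ((H.card : ℝ) + (U.card : ℝ)) ≤ (({x | pred x = true ∧ θ < F x ω}.ncard : ℝ)) / ((({x | pred x = true ∧ θ < F x ω}.ncard : ℝ)) + (({x | pred x = true ∧ F x ω ≤ θ}.ncard : ℝ)))} with hS
  set E : Set Ω := ⋂ x ∈ H, {ω | θ < F x ω} with hE
  have hmeasA : ∀ x : X, MeasurableSet {ω | θ < F x ω} := fun x =>
    measurableSet_lt measurable_const (hF x)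
  have hmeasE : MeasurableSet E :=
    MeasurableSet.biInter (Finset.countable_toSet H) (fun x _ => hmeasA x)
  -- complement relation: pH x + pL x = 1
  have hcompl : ∀ x : X, pH x + pL x = 1 := by
    intro x
    have : {ω | F x ω ≤ θ} = {ω | θ < F x ω}ᶜ := by
      ext ω; simp [not_lt]
    rw [hpH, hpL, this, prob_compl_eq_one_sub (hmeasA x),
      ENNReal.toReal_sub_of_le prob_le_one ENNReal.one_ne_top, ENNReal.toReal_one]
    ring
  have hpHnn : ∀ x, 0 ≤ pH x := fun x => by rw [hpH]; exact ENNReal.toReal_nonneg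
  have hpLnn : ∀ x, 0 ≤ pL x := fun x => by rw [hpL]; exact ENNReal.toReal_nonneg
  have hpUle : ∀ x, pU x ≤ 1 := by
    intro x
    rw [hpU]
    exact ENNReal.toReal_le_of_le_ofReal zero_le_one (by simpa using prob_le_one)
  have hrminnn : ∀ x, 0 ≤ rmin x := by
    intro x
    rw [hrmin]
    exact le_min (hpHnn x) (le_min (hpLnn x) (by linarith [hpUle x]))
  -- on H, pL ≤ rmin
  have hkey : ∀ x ∈ H, pL x ≤ rmin x := by
    intro x hx
    have hmax := hH x hx
    rw [hrmax] at hmax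
    have h1 : pL x ≤ pH x := by
      have := le_max_right (pH x) (max (pL x) (pU x))
      have := le_max_left (pL x) (pU x)
      nlinarith [le_max_left (pL x) (pU x), le_max_right (pH x) (max (pL x) (pU x))]
    have h2 : pU x ≤ pH x := by
      nlinarith [le_max_right (pL x) (pU x), le_max_right (pH x) (max (pL x) (pU x))]
    rw [hrmin]
    have := hcompl x
    exact le_min h1 (le_min le_rfl (by linarith))
  -- μ Eᶜ ≤ ∑ pL over H
  have hEc : Eᶜ = ⋃ x ∈ H, {ω | F x ω ≤ θ} := by
    rw [hE, Set.compl_iInter₂]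
    ext ω; simp [not_lt]
  have h1 : μ Eᶜ ≤ ∑ x ∈ H, μ {ω | F x ω ≤ θ} := by
    rw [hEc]
    exact measure_biUnion_finset_le H _
  have hsumne : (∑ x ∈ H, μ {ω | F x ω ≤ θ}) ≠ ⊤ :=
    ENNReal.sum_ne_top.2 fun x _ => measure_ne_top μ _
  have h2 : (μ Eᶜ).toReal ≤ ∑ x ∈ H, pL x := by
    calc (μ Eᶜ).toReal ≤ (∑ x ∈ H, μ {ω | F x ω ≤ θ}).toReal :=
          ENNReal.toReal_mono hsumne h1
      _ = ∑ x ∈ H, pL x := by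
          rw [ENNReal.toReal_sum (fun x _ => measure_ne_top μ _)]
          exact Finset.sum_congr rfl fun x _ => (hpL x).symm
  have h3 : ∑ x ∈ H, pL x ≤ ∑ x, rmin x := by
    calc ∑ x ∈ H, pL x ≤ ∑ x ∈ H, rmin x := Finset.sum_le_sum hkey
      _ ≤ ∑ x, rmin x :=
          Finset.sum_le_sum_of_subset_of_nonneg (Finset.subset_univ H)
            (fun x _ _ => hrminnn x)
  have hEtoReal : (μ E).toReal = 1 - (μ Eᶜ).toReal := by
    rw [prob_compl_eq_one_sub hmeasE,
      ENNReal.toReal_sub_of_le prob_le_one ENNReal.one_ne_top, ENNReal.toReal_one]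
    ring
  -- E ⊆ S
  have hsub : E ⊆ S := by
    intro ω hω pred hpt hpf
    have hωmem : ∀ x ∈ H, θ < F x ω := by
      intro x hx
      have := Set.mem_iInter₂.1 hω x hx
      exact this
    set A : Set X := {x | pred x = true ∧ θ < F x ω} with hA
    set B : Set X := {x | pred x = true ∧ F x ω ≤ θ} with hB
    have hHA : (H : Set X) ⊆ A := fun x hx => ⟨hpt x hx, hωmem x hx⟩
    have hBU : B ⊆ (U : Set X) := by
      intro x hx
      obtain ⟨hxp, hxle⟩ := hx
      have hxu : x ∈ Finset.univ := Finset.mem_univ x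
      rw [← hunion, Finset.mem_union, Finset.mem_union] at hxu
      rcases hxu with (hx' | hx') | hx'
      · exact absurd (hωmem x hx') (not_lt.2 hxle)
      · rw [hpf x hx'] at hxp; exact absurd hxp (by simp)
      · exact hx'
    have hcardA : (H.card : ℝ) ≤ (A.ncard : ℝ) := by
      have : H.card ≤ A.ncard := by
        rw [← Set.ncard_coe_finset]
        exact Set.ncard_le_ncard hHA (Set.toFinite A)
      exact_mod_cast this
    have hcardB : (B.ncard : ℝ) ≤ (U.card : ℝ) := by
      have : B.ncard ≤ U.card := by
        rw [← Set.ncard_coe_finset]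
        exact Set.ncard_le_ncard hBU (Set.toFinite _)
      exact_mod_cast this
    have hHpos : (0 : ℝ) < H.card := by
      exact_mod_cast Finset.card_pos.2 hne
    have hBnn : (0 : ℝ) ≤ (B.ncard : ℝ) := Nat.cast_nonneg _
    have hUnn : (0 : ℝ) ≤ (U.card : ℝ) := Nat.cast_nonneg _
    rw [div_le_div_iff₀ (by linarith) (by linarith)]
    nlinarith
  have h4 : (μ E).toReal ≤ (μ S).toReal :=
    ENNReal.toReal_mono (measure_ne_top μ S) (measure_mono hsub)
  linarith
end

section
/- Suppose X is partitioned into pairwise disjoint sets H̃, L̃, Ũ with H̃ ∪ L̃ ∪ Ũ = X such that pH(x) = r^max(x) for all x ∈ H̃, pL(x) = r^max(x) for all x ∈ L̃, pU(x) = r^max(x) for all x ∈ Ũ, and H̃ is nonempty. Then with probability at least 1 − Σ_{x ∈ X} r^min(x) over ω, the following holds: for every pred : X → Bool with pred x = true for all x ∈ H̃ and pred x = false for all x ∈ L̃, the recall satisfies TP / (TP + FN) ≥ |H̃| / (|H̃| + |Ũ|). -/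
open MeasureTheory

lemma ratio_aux (h u a b : ℝ) (h1 : 1 ≤ h) (ha : h ≤ a) (hb : b ≤ u)
    (hb0 : 0 ≤ b) (hu0 : 0 ≤ u) : h / (h + u) ≤ a / (a + b) := by
  rw [div_le_div_iff₀ (by linarith) (by linarith)]
  nlinarith

theorem stmt_9
    {Ω : Type*} [MeasurableSpace Ω] (μ : Measure Ω) [IsProbabilityMeasure μ]
    {X : Type*} [Fintype X] [DecidableEq X]
    (θ ε : ℝ) (hε : 0 < ε)
    (F : X → Ω → ℝ) (hF : ∀ x, Measurable (F x))
    (pH pL pU rmin rmax : X → ℝ)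
    (hpH : ∀ x, pH x = (μ {ω | θ < F x ω}).toReal)
    (hpL : ∀ x, pL x = (μ {ω | F x ω ≤ θ}).toReal)
    (hpU : ∀ x, pU x = (μ {ω | θ - ε / 2 < F x ω ∧ F x ω ≤ θ + ε / 2}).toReal)
    (hrmin : ∀ x, rmin x = min (pH x) (min (pL x) (1 - pU x)))
    (hrmax : ∀ x, rmax x = max (pH x) (max (pL x) (pU x)))
    (H L U : Finset X)
    (hHL : Disjoint H L) (hHU : Disjoint H U) (hLU : Disjoint L U)
    (hunion : H ∪ L ∪ U = Finset.univ)
    (hH : ∀ x ∈ H, pH x = rmax x)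
    (hL : ∀ x ∈ L, pL x = rmax x)
    (hU : ∀ x ∈ U, pU x = rmax x)
    (hne : H.Nonempty) :
    1 - ∑ x, rmin x ≤
      (μ {ω | ∀ pred : X → Bool,
          (∀ x ∈ H, pred x = true) → (∀ x ∈ L, pred x = false) →
          (H.card : ℝ) / ((H.card : ℝ) + (U.card : ℝ)) ≤ (({x | pred x = true ∧ θ < F x ω}.ncard : ℝ)) / ((({x | pred x = true ∧ θ < F x ω}.ncard : ℝ)) + (({x | pred x = false ∧ θ < F x ω}.ncard : ℝ)))}).toReal := by
  classical
  -- basic facts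
  have hmeasL : ∀ x : X, MeasurableSet {ω | F x ω ≤ θ} := fun x =>
    (hF x) measurableSet_Iic
  have hmeasH : ∀ x : X, MeasurableSet {ω | θ < F x ω} := fun x =>
    (hF x) measurableSet_Ioi
  have hcompl : ∀ x : X, {ω | θ < F x ω} = {ω | F x ω ≤ θ}ᶜ := by
    intro x; ext ω; simp [not_le]
  have hsum1 : ∀ x : X, pH x + pL x = 1 := by
    intro x
    rw [hpH, hpL, hcompl]
    rw [← ENNReal.toReal_add (measure_ne_top μ _) (measure_ne_top μ _)]
    rw [add_comm, measure_add_measure_compl (hmeasL x)]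
    simp
  have hnonneg : ∀ x : X, 0 ≤ pH x ∧ 0 ≤ pL x ∧ 0 ≤ pU x := by
    intro x
    refine ⟨?_, ?_, ?_⟩ <;> simp [hpH, hpL, hpU, ENNReal.toReal_nonneg]
  -- r^min ≥ 0
  have hrmin_nonneg : ∀ x : X, 0 ≤ rmin x := by
    intro x
    have hU1 : pU x ≤ 1 := by
      rw [hpU]
      exact ENNReal.toReal_le_of_le_ofReal zero_le_one (by simpa using prob_le_one)
    obtain ⟨h1, h2, h3⟩ := hnonneg x
    rw [hrmin]
    simp only [le_min_iff]
    exact ⟨h1, h2, by linarith⟩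
  -- for x ∈ H : pL x ≤ rmin x
  have hkeyH : ∀ x ∈ H, pL x ≤ rmin x := by
    intro x hx
    have hmax := hH x hx
    rw [hrmax] at hmax
    have h1 : pL x ≤ pH x :=
      le_trans (le_trans (le_max_left _ _) (le_max_right _ _)) hmax.symm.le
    have h2 : pU x ≤ pH x :=
      le_trans (le_trans (le_max_right _ _) (le_max_right _ _)) hmax.symm.le
    have hs := hsum1 x
    rw [hrmin]
    simp only [le_min_iff]
    exact ⟨h1, le_refl _, by linarith⟩
  -- for x ∈ L : pH x ≤ rmin x
  have hkeyL : ∀ x ∈ L, pH x ≤ rmin x := by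
    intro x hx
    have hmax := hL x hx
    rw [hrmax] at hmax
    have h1 : pH x ≤ pL x := by
      have := hmax.symm.le
      exact le_trans (le_max_left _ _) this
    have h2 : pU x ≤ pL x := by
      have := hmax.symm.le
      exact le_trans (le_trans (le_max_right _ _) (le_max_right _ _)) this
    have hs := hsum1 x
    rw [hrmin]
    simp only [le_min_iff]
    exact ⟨le_refl _, h1, by linarith⟩
  -- the bad event
  set B : Set Ω := (⋃ x ∈ H, {ω | F x ω ≤ θ}) ∪ (⋃ x ∈ L, {ω | θ < F x ω}) with hB
  have hBmeas : MeasurableSet B := by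
    apply MeasurableSet.union
    · exact MeasurableSet.biUnion H.countable_toSet (fun x _ => hmeasL x)
    · exact MeasurableSet.biUnion L.countable_toSet (fun x _ => hmeasH x)
  -- bound μ B
  have hμB : (μ B).toReal ≤ ∑ x, rmin x := by
    have h1 : μ B ≤ ∑ x ∈ H, μ {ω | F x ω ≤ θ} + ∑ x ∈ L, μ {ω | θ < F x ω} := by
      refine le_trans (measure_union_le _ _) (add_le_add ?_ ?_)
      · exact measure_biUnion_finset_le H _
      · exact measure_biUnion_finset_le L _
    have hne1 : (∑ x ∈ H, μ {ω | F x ω ≤ θ}) ≠ ⊤ :=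
      ENNReal.sum_ne_top.mpr (fun x _ => measure_ne_top μ _)
    have hne2 : (∑ x ∈ L, μ {ω | θ < F x ω}) ≠ ⊤ :=
      ENNReal.sum_ne_top.mpr (fun x _ => measure_ne_top μ _)
    have h2 : (μ B).toReal ≤ (∑ x ∈ H, μ {ω | F x ω ≤ θ}).toReal
        + (∑ x ∈ L, μ {ω | θ < F x ω}).toReal := by
      rw [← ENNReal.toReal_add hne1 hne2]
      exact ENNReal.toReal_mono (by simp [hne1, hne2]) h1
    rw [ENNReal.toReal_sum (fun x _ => measure_ne_top μ _),
        ENNReal.toReal_sum (fun x _ => measure_ne_top μ _)] at h2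
    have h3 : ∑ x ∈ H, (μ {ω | F x ω ≤ θ}).toReal = ∑ x ∈ H, pL x := by
      exact Finset.sum_congr rfl (fun x _ => (hpL x).symm)
    have h4 : ∑ x ∈ L, (μ {ω | θ < F x ω}).toReal = ∑ x ∈ L, pH x := by
      exact Finset.sum_congr rfl (fun x _ => (hpH x).symm)
    rw [h3, h4] at h2
    have h5 : ∑ x ∈ H, pL x ≤ ∑ x ∈ H, rmin x := Finset.sum_le_sum hkeyH
    have h6 : ∑ x ∈ L, pH x ≤ ∑ x ∈ L, rmin x := Finset.sum_le_sum hkeyL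
    have h7 : ∑ x ∈ H, rmin x + ∑ x ∈ L, rmin x = ∑ x ∈ H ∪ L, rmin x :=
      (Finset.sum_union hHL).symm
    have h8 : ∑ x ∈ H ∪ L, rmin x ≤ ∑ x, rmin x := by
      apply Finset.sum_le_sum_of_subset_of_nonneg (Finset.subset_univ _)
      intro x _ _; exact hrmin_nonneg x
    linarith
  -- the good event is contained in the target set
  set S : Set Ω := {ω | ∀ pred : X → Bool,
      (∀ x ∈ H, pred x = true) → (∀ x ∈ L, pred x = false) →
      (H.card : ℝ) / ((H.card : ℝ) + (U.card : ℝ)) ≤ (({x | pred x = true ∧ θ < F x ω}.ncard : ℝ)) / ((({x | pred x = true ∧ θ < F x ω}.ncard : ℝ)) + (({x | pred x = false ∧ θ < F x ω}.ncard : ℝ)))} with hS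
  have hsub : Bᶜ ⊆ S := by
    intro ω hω
    simp only [hB, Set.compl_union, Set.mem_inter_iff, Set.compl_iUnion, Set.mem_iInter,
      Set.mem_compl_iff, Set.mem_setOf_eq, not_le, not_lt] at hω
    obtain ⟨hgH, hgL⟩ := hω
    intro pred hpredH hpredL
    set T : Set X := {x | pred x = true ∧ θ < F x ω} with hT
    set Fs : Set X := {x | pred x = false ∧ θ < F x ω} with hFs
    have hHT : (H : Set X) ⊆ T := by
      intro x hx
      exact ⟨hpredH x hx, hgH x hx⟩
    have hFU : Fs ⊆ (U : Set X) := by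
      intro x hx
      obtain ⟨hxp, hxF⟩ := hx
      have hxuniv : x ∈ H ∪ L ∪ U := by rw [hunion]; exact Finset.mem_univ x
      simp only [Finset.mem_union] at hxuniv
      rcases hxuniv with (hxH | hxL) | hxU
      · exact absurd (hpredH x hxH) (by simp [hxp])
      · exact absurd (hgL x hxL) (not_le.mpr hxF)
      · exact hxU
    have hTcard : (H.card : ℝ) ≤ (T.ncard : ℝ) := by
      have := Set.ncard_le_ncard hHT (Set.toFinite T)
      rw [Set.ncard_coe_finset] at this
      exact_mod_cast this
    have hFcard : (Fs.ncard : ℝ) ≤ (U.card : ℝ) := by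
      have := Set.ncard_le_ncard hFU (Set.toFinite _)
      rw [Set.ncard_coe_finset] at this
      exact_mod_cast this
    have hH1 : (1 : ℝ) ≤ (H.card : ℝ) := by
      exact_mod_cast Finset.card_pos.mpr hne
    exact ratio_aux _ _ _ _ hH1 hTcard hFcard (by positivity) (by positivity)
  -- conclude
  have hμS : μ Bᶜ ≤ μ S := measure_mono hsub
  have hcomplμ : (μ Bᶜ).toReal = 1 - (μ B).toReal := by
    rw [prob_compl_eq_one_sub hBmeas]
    rw [ENNReal.toReal_sub_of_le prob_le_one ENNReal.one_ne_top]
    simp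
  have hfin : (μ Bᶜ).toReal ≤ (μ S).toReal :=
    ENNReal.toReal_mono (measure_ne_top μ _) hμS
  linarith
end

section
/- Suppose X is partitioned into pairwise disjoint sets H̃, L̃, Ũ with H̃ ∪ L̃ ∪ Ũ = X such that pH(x) = r^max(x) for all x ∈ H̃, pL(x) = r^max(x) for all x ∈ L̃, pU(x) = r^max(x) for all x ∈ Ũ, and L̃ is nonempty. Then with probability at least 1 − Σ_{x ∈ X} r^min(x) over ω, the following holds: for every pred : X → Bool with pred x = true for all x ∈ H̃ and pred x = false for all x ∈ L̃, the specificity satisfies TN / (TN + FP) ≥ |L̃| / (|L̃| + |Ũ|). -/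
open MeasureTheory

theorem stmt_10
    {Ω : Type*} [MeasurableSpace Ω] (μ : Measure Ω) [IsProbabilityMeasure μ]
    {X : Type*} [Fintype X] [DecidableEq X]
    (θ ε : ℝ) (hε : 0 < ε)
    (F : X → Ω → ℝ) (hF : ∀ x, Measurable (F x))
    (pH pL pU rmin rmax : X → ℝ)
    (hpH : ∀ x, pH x = (μ {ω | θ < F x ω}).toReal)
    (hpL : ∀ x, pL x = (μ {ω | F x ω ≤ θ}).toReal)
    (hpU : ∀ x, pU x = (μ {ω | θ - ε / 2 < F x ω ∧ F x ω ≤ θ + ε / 2}).toReal)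
    (hrmin : ∀ x, rmin x = min (pH x) (min (pL x) (1 - pU x)))
    (hrmax : ∀ x, rmax x = max (pH x) (max (pL x) (pU x)))
    (H L U : Finset X)
    (hHL : Disjoint H L) (hHU : Disjoint H U) (hLU : Disjoint L U)
    (hunion : H ∪ L ∪ U = Finset.univ)
    (hH : ∀ x ∈ H, pH x = rmax x)
    (hL : ∀ x ∈ L, pL x = rmax x)
    (hU : ∀ x ∈ U, pU x = rmax x)
    (hne : L.Nonempty) :
    1 - ∑ x, rmin x ≤
      (μ {ω | ∀ pred : X → Bool,
          (∀ x ∈ H, pred x = true) → (∀ x ∈ L, pred x = false) →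
          (L.card : ℝ) / ((L.card : ℝ) + (U.card : ℝ)) ≤ (({x | pred x = false ∧ F x ω ≤ θ}.ncard : ℝ)) / ((({x | pred x = false ∧ F x ω ≤ θ}.ncard : ℝ)) + (({x | pred x = true ∧ F x ω ≤ θ}.ncard : ℝ)))}).toReal := by
  classical
  -- basic measure facts
  have hmeasLe : ∀ x, MeasurableSet {ω | F x ω ≤ θ} := fun x =>
    measurableSet_le (hF x) measurable_const
  have hcompl : ∀ x, {ω | θ < F x ω} = {ω | F x ω ≤ θ}ᶜ := by
    intro x; ext ω; simp [not_le]
  have hsum1 : ∀ x, pH x = 1 - pL x := by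
    intro x
    rw [hpH, hpL, hcompl, prob_compl_eq_one_sub (hmeasLe x)]
    rw [ENNReal.toReal_sub_of_le prob_le_one ENNReal.one_ne_top]
    simp
  have hpHnn : ∀ x, 0 ≤ pH x := fun x => by rw [hpH]; exact ENNReal.toReal_nonneg
  have hpLnn : ∀ x, 0 ≤ pL x := fun x => by rw [hpL]; exact ENNReal.toReal_nonneg
  have hpUle1 : ∀ x, pU x ≤ 1 := by
    intro x; rw [hpU]
    exact ENNReal.toReal_le_of_le_ofReal zero_le_one (by simpa using prob_le_one)
  have hrminnn : ∀ x, 0 ≤ rmin x := by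
    intro x; rw [hrmin]
    exact le_min (hpHnn x) (le_min (hpLnn x) (by linarith [hpUle1 x]))
  -- rmin bounds on H and L
  have hrminH : ∀ x ∈ H, pL x ≤ rmin x := by
    intro x hx
    have hm := hH x hx; rw [hrmax] at hm
    have h1 : pL x ≤ pH x := ((le_max_left _ _).trans (le_max_right _ _)).trans hm.ge
    have h2 : pU x ≤ pH x := ((le_max_right _ _).trans (le_max_right _ _)).trans hm.ge
    rw [hrmin]
    exact le_min h1 (le_min le_rfl (by linarith [hsum1 x]))
  have hrminL : ∀ x ∈ L, pH x ≤ rmin x := by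
    intro x hx
    have hm := hL x hx; rw [hrmax] at hm
    have h1 : pH x ≤ pL x := (le_max_left _ _).trans hm.ge
    have h2 : pU x ≤ pL x := ((le_max_right _ _).trans (le_max_right _ _)).trans hm.ge
    rw [hrmin]
    exact le_min le_rfl (le_min h1 (by linarith [hsum1 x]))
  -- the bad event
  set bad : X → Set Ω := fun x => if x ∈ H then {ω | F x ω ≤ θ} else {ω | θ < F x ω} with hbad
  have hbadMeas : ∀ x, MeasurableSet (bad x) := by
    intro x; rw [hbad]; dsimp only
    split
    · exact hmeasLe x
    · rw [hcompl]; exact (hmeasLe x).compl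
  set B : Set Ω := ⋃ x ∈ (H ∪ L : Finset X), bad x with hB
  have hBmeas : MeasurableSet B :=
    MeasurableSet.biUnion (Finset.countable_toSet _) (fun x _ => hbadMeas x)
  -- good event is contained in the target
  have hsub : Bᶜ ⊆ {ω | ∀ pred : X → Bool,
          (∀ x ∈ H, pred x = true) → (∀ x ∈ L, pred x = false) →
          (L.card : ℝ) / ((L.card : ℝ) + (U.card : ℝ)) ≤ (({x | pred x = false ∧ F x ω ≤ θ}.ncard : ℝ)) / ((({x | pred x = false ∧ F x ω ≤ θ}.ncard : ℝ)) + (({x | pred x = true ∧ F x ω ≤ θ}.ncard : ℝ)))} := by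
    intro ω hω
    simp only [hB, Set.mem_compl_iff, Set.mem_iUnion, not_exists] at hω
    have hgoodH : ∀ x ∈ H, θ < F x ω := by
      intro x hx
      have := hω x (Finset.mem_union_left _ hx)
      simp only [hbad, hx, if_pos] at this
      exact not_le.mp this
    have hgoodL : ∀ x ∈ L, F x ω ≤ θ := by
      intro x hx
      have hxnH : x ∉ H := fun h => (Finset.disjoint_left.mp hHL) h hx
      have := hω x (Finset.mem_union_right _ hx)
      simp only [hbad, hxnH, if_neg, if_false] at this
      exact not_lt.mp this
    intro pred hpredH hpredL
    set TNs : Set X := {x | pred x = false ∧ F x ω ≤ θ} with hTNs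
    set FPs : Set X := {x | pred x = true ∧ F x ω ≤ θ} with hFPs
    have hLsub : (L : Set X) ⊆ TNs := by
      intro x hx
      exact ⟨hpredL x hx, hgoodL x hx⟩
    have hFPsub : FPs ⊆ (U : Set X) := by
      intro x hx
      have hxU : x ∈ H ∪ L ∪ U := hunion ▸ Finset.mem_univ x
      rcases Finset.mem_union.mp hxU with h | h
      · rcases Finset.mem_union.mp h with h | h
        · exact absurd hx.2 (not_le.mpr (hgoodH x h))
        · have h1 := hx.1; rw [hpredL x h] at h1; simp at h1
      · exact h
    have hTN : (L.card : ℝ) ≤ (TNs.ncard : ℝ) := by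
      have := Set.ncard_le_ncard hLsub (Set.toFinite _)
      rw [Set.ncard_coe_finset] at this
      exact_mod_cast this
    have hFP : (FPs.ncard : ℝ) ≤ (U.card : ℝ) := by
      have := Set.ncard_le_ncard hFPsub (Set.toFinite _)
      rw [Set.ncard_coe_finset] at this
      exact_mod_cast this
    have hLpos : (0 : ℝ) < L.card := by exact_mod_cast Finset.card_pos.mpr hne
    have hFPnn : (0 : ℝ) ≤ (FPs.ncard : ℝ) := Nat.cast_nonneg _
    have hUnn : (0 : ℝ) ≤ (U.card : ℝ) := Nat.cast_nonneg _
    rw [div_le_div_iff₀ (by linarith) (by linarith)]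
    nlinarith [mul_le_mul hTN hFP hFPnn (by linarith : (0:ℝ) ≤ (TNs.ncard : ℝ))]
  -- measure bound
  have hBle : (μ B).toReal ≤ ∑ x ∈ H ∪ L, (μ (bad x)).toReal := by
    have h1 : μ B ≤ ∑ x ∈ H ∪ L, μ (bad x) := measure_biUnion_finset_le _ _
    calc (μ B).toReal ≤ (∑ x ∈ H ∪ L, μ (bad x)).toReal :=
          ENNReal.toReal_mono (ENNReal.sum_ne_top.mpr fun x _ => measure_ne_top μ _) h1
      _ = ∑ x ∈ H ∪ L, (μ (bad x)).toReal :=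
          ENNReal.toReal_sum fun x _ => measure_ne_top μ _
  have hsumHL : ∑ x ∈ H ∪ L, (μ (bad x)).toReal ≤ ∑ x, rmin x := by
    have h1 : ∑ x ∈ H ∪ L, (μ (bad x)).toReal ≤ ∑ x ∈ H ∪ L, rmin x := by
      apply Finset.sum_le_sum
      intro x hx
      rcases Finset.mem_union.mp hx with h | h
      · have : (μ (bad x)).toReal = pL x := by
          simp only [hbad, h, if_pos]; rw [hpL]
        rw [this]; exact hrminH x h
      · have hxnH : x ∉ H := fun h' => (Finset.disjoint_left.mp hHL) h' h
        have : (μ (bad x)).toReal = pH x := by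
          simp only [hbad, hxnH, if_neg, if_false]; rw [hpH]
        rw [this]; exact hrminL x h
    refine le_trans h1 ?_
    exact Finset.sum_le_sum_of_subset_of_nonneg (Finset.subset_univ _)
      (fun x _ _ => hrminnn x)
  have hcomplB : (μ Bᶜ).toReal = 1 - (μ B).toReal := by
    rw [prob_compl_eq_one_sub hBmeas,
      ENNReal.toReal_sub_of_le prob_le_one ENNReal.one_ne_top]
    simp
  calc 1 - ∑ x, rmin x ≤ 1 - (μ B).toReal := by
        have := le_trans hBle hsumHL; linarith
    _ = (μ Bᶜ).toReal := hcomplB.symm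
    _ ≤ _ := ENNReal.toReal_mono (measure_ne_top μ _) (measure_mono hsub)
end

section
/- Let m, θ ∈ ℝ, σ > 0, and β ∈ ℝ with Φ(β) > 1/2. Define pH = 1 − Φ((θ − m)/σ), pL = Φ((θ − m)/σ), and pU = Φ(β). Then the following three equivalences hold: (i) m − βσ > θ if and only if pH > pL and pH > pU; (ii) m + βσ < θ if and only if pL > pH and pL > pU; (iii) (m − βσ ≤ θ and m + βσ ≥ θ) if and only if pU ≥ pH and pU ≥ pL. (That is, the confidence-bound classification rule with parameter β coincides with classification by the largest of the three probabilities pH, pL, pU when Pr(x ∈ U_θ) is identified with Φ(β) > 1/2.) -/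
open MeasureTheory ProbabilityTheory
open Set
open scoped NNReal

/-! With x = (θ - m)/σ the three conditions compare x with ±β. Since Φ is strictly increasing
and Φ(-t) = 1 - Φ(t), we have pH = Φ(-x), pL = Φ(x), pU = Φ(β), so comparing the probabilities
amounts to comparing -x, x and β. Finally Φ(β) > 1/2 = Φ(0) forces β > 0, which is what makes
x < -β imply x < 0 (and β < x imply 0 < x). -/

namespace ProbabilityTheory

section CDF

variable {μ : Measure ℝ} [IsProbabilityMeasure μ]

theorem strictMono_cdf_of_absolutelyContinuous (hμ : volume ≪ μ) : StrictMono (cdf μ) := by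
  intro x y hxy
  have hIoc : 0 < μ.real (Ioc x y) := by
    refine ENNReal.toReal_pos (fun h0 => ?_) (measure_ne_top _ _)
    have := hμ h0
    simp only [Real.volume_Ioc, ENNReal.ofReal_eq_zero] at this
    linarith
  calc cdf μ x < μ.real (Iic x) + μ.real (Ioc x y) := by rw [cdf_eq_real]; linarith
    _ = cdf μ y := by
      rw [← measureReal_union (Iic_disjoint_Ioc le_rfl) measurableSet_Ioc,
        Iic_union_Ioc_eq_Iic hxy.le, cdf_eq_real]

theorem cdf_neg_of_map_neg [NullSingletonClass μ] (hμ : μ.map (fun t => -t) = μ) (x : ℝ) :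
    cdf μ (-x) = 1 - cdf μ x := calc
  cdf μ (-x) = (μ.map (fun t => -t)).real (Iic (-x)) := by rw [hμ, cdf_eq_real]
  _ = μ.real (Ici x) := by
    rw [map_measureReal_apply measurable_neg measurableSet_Iic, neg_preimage, neg_Iic, neg_neg]
  _ = μ.real (Ioi x) := measureReal_congr Ioi_ae_eq_Ici.symm
  _ = 1 - cdf μ x := by rw [← compl_Iic, measureReal_compl measurableSet_Iic, cdf_eq_real]; simp

end CDF

theorem strictMono_cdf_gaussianReal (μ : ℝ) {v : ℝ≥0} (hv : v ≠ 0) :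
    StrictMono (cdf (gaussianReal μ v)) :=
  strictMono_cdf_of_absolutelyContinuous (gaussianReal_absolutelyContinuous' μ hv)

theorem cdf_gaussianReal_zero_neg {v : ℝ≥0} (hv : v ≠ 0) (x : ℝ) :
    cdf (gaussianReal 0 v) (-x) = 1 - cdf (gaussianReal 0 v) x :=
  haveI := nullSingletonClass_gaussianReal (μ := 0) hv
  cdf_neg_of_map_neg (by rw [gaussianReal_map_neg, neg_zero]) x

end ProbabilityTheory

namespace StrictMono

variable {F : ℝ → ℝ} (hF : StrictMono F) (hsymm : ∀ t, F (-t) = 1 - F t) {x β : ℝ}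
include hF hsymm

theorem pos_of_half_lt (hβ : 1 / 2 < F β) : 0 < β := by
  have h0 : F 0 = 1 / 2 := by
    have := hsymm 0
    rw [neg_zero] at this
    linarith
  exact hF.lt_iff_lt.mp (h0 ▸ hβ)

theorem lt_neg_iff_of_symm (hβ : 1 / 2 < F β) :
    x < -β ↔ F x < 1 - F x ∧ F β < 1 - F x := by
  have hβ₀ := hF.pos_of_half_lt hsymm hβ
  rw [← hsymm, hF.lt_iff_lt, hF.lt_iff_lt]
  constructor
  · intro h; exact ⟨by linarith, by linarith⟩
  · rintro ⟨-, h⟩; linarith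

theorem lt_iff_of_symm (hβ : 1 / 2 < F β) :
    β < x ↔ 1 - F x < F x ∧ F β < F x := by
  have hβ₀ := hF.pos_of_half_lt hsymm hβ
  rw [← hsymm, hF.lt_iff_lt, hF.lt_iff_lt]
  constructor
  · intro h; exact ⟨by linarith, h⟩
  · exact fun h => h.2

theorem neg_le_and_le_iff_of_symm :
    (-β ≤ x ∧ x ≤ β) ↔ 1 - F x ≤ F β ∧ F x ≤ F β := by
  rw [← hsymm, hF.le_iff_le, hF.le_iff_le, neg_le]

end StrictMono

theorem stmt_15
    (m θ σ β : ℝ) (hσ : 0 < σ)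
    (Φ : ℝ → ℝ) (hΦ : ∀ t, Φ t = cdf (gaussianReal 0 1) t)
    (hβ : 1 / 2 < Φ β)
    (pH pL pU : ℝ)
    (hpH : pH = 1 - Φ ((θ - m) / σ))
    (hpL : pL = Φ ((θ - m) / σ))
    (hpU : pU = Φ β) :
    (θ < m - β * σ ↔ pL < pH ∧ pU < pH) ∧
    (m + β * σ < θ ↔ pH < pL ∧ pU < pL) ∧
    ((m - β * σ ≤ θ ∧ θ ≤ m + β * σ) ↔ pH ≤ pU ∧ pL ≤ pU) := by
  obtain rfl : Φ = cdf (gaussianReal 0 1) := funext hΦ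
  subst hpH hpL hpU
  have hF := strictMono_cdf_gaussianReal 0 one_ne_zero
  have hsymm := cdf_gaussianReal_zero_neg one_ne_zero
  refine ⟨?_, ?_, ?_⟩
  · rw [← hF.lt_neg_iff_of_symm hsymm hβ, div_lt_iff₀ hσ]
    constructor <;> intro <;> linarith
  · rw [← hF.lt_iff_of_symm hsymm hβ, lt_div_iff₀ hσ]
    constructor <;> intro <;> linarith
  · rw [← hF.neg_le_and_le_iff_of_symm hsymm, le_div_iff₀ hσ, div_le_iff₀ hσ]
    constructor <;> rintro ⟨h₁, h₂⟩ <;> constructor <;> linarith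
end

section
/- Let X be a finite set partitioned into pairwise disjoint sets H̃, L̃, Ũ with H̃ ∪ L̃ ∪ Ũ = X, let f : X → ℝ and θ ∈ ℝ, and assume f x > θ for every x ∈ H̃, f x ≤ θ for every x ∈ L̃, and H̃ is nonempty. Then for every pred : X → Bool with pred x = true for all x ∈ H̃ and pred x = false for all x ∈ L̃, setting TP = |{x ∈ X | pred x = true and f x > θ}|, FP = |{x ∈ X | pred x = true and f x ≤ θ}|, FN = |{x ∈ X | pred x = false and f x > θ}|, one has 2·TP / (2·TP + FP + FN) ≥ 2·|H̃| / (2·|H̃| + |Ũ|). -/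
theorem stmt_17
    {X : Type*} [Fintype X] [DecidableEq X]
    (f : X → ℝ) (θ : ℝ)
    (H L U : Finset X)
    (hHL : Disjoint H L) (hHU : Disjoint H U) (hLU : Disjoint L U)
    (hunion : H ∪ L ∪ U = Finset.univ)
    (hfH : ∀ x ∈ H, θ < f x)
    (hfL : ∀ x ∈ L, f x ≤ θ)
    (hne : H.Nonempty)
    (pred : X → Bool)
    (hpredH : ∀ x ∈ H, pred x = true)
    (hpredL : ∀ x ∈ L, pred x = false) :
    2 * (H.card : ℝ) / (2 * (H.card : ℝ) + (U.card : ℝ)) ≤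
      2 * (({x | pred x = true ∧ θ < f x}.ncard : ℝ)) /
        (2 * (({x | pred x = true ∧ θ < f x}.ncard : ℝ)) +
          (({x | pred x = true ∧ f x ≤ θ}.ncard : ℝ)) +
          (({x | pred x = false ∧ θ < f x}.ncard : ℝ))) := by
  set S1 : Set X := {x | pred x = true ∧ θ < f x} with hS1
  set S2 : Set X := {x | pred x = true ∧ f x ≤ θ} with hS2
  set S3 : Set X := {x | pred x = false ∧ θ < f x} with hS3
  have h1 : (↑H : Set X) ⊆ S1 := fun x hx => ⟨hpredH x hx, hfH x hx⟩
  have hTP : H.card ≤ S1.ncard := by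
    simpa [Set.ncard_coe_finset] using Set.ncard_le_ncard h1 (Set.toFinite _)
  have hmemU : ∀ x : X, x ∉ H → x ∉ L → x ∈ U := by
    intro x hxH hxL
    have : x ∈ H ∪ L ∪ U := hunion ▸ Finset.mem_univ x
    simp only [Finset.mem_union] at this
    tauto
  have h2 : S2 ⊆ (↑U : Set X) := by
    intro x hx
    obtain ⟨hp, hf⟩ := hx
    exact hmemU x (fun hxH => absurd (hfH x hxH) (not_lt.2 hf))
      (fun hxL => by simp [hpredL x hxL] at hp)
  have h3 : S3 ⊆ (↑U : Set X) := by
    intro x hx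
    obtain ⟨hp, hf⟩ := hx
    exact hmemU x (fun hxH => by simp [hpredH x hxH] at hp)
      (fun hxL => absurd hf (not_lt.2 (hfL x hxL)))
  have hdisj : Disjoint S2 S3 := by
    rw [Set.disjoint_left]
    rintro x ⟨hp, _⟩ ⟨hp', _⟩
    simp [hp] at hp'
  have hUcard : S2.ncard + S3.ncard ≤ U.card := by
    have := Set.ncard_union_eq hdisj (Set.toFinite _) (Set.toFinite _)
    have hsub : S2 ∪ S3 ⊆ (↑U : Set X) := Set.union_subset h2 h3
    have h := Set.ncard_le_ncard hsub (Set.toFinite _)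
    rwa [this, Set.ncard_coe_finset] at h
  have ha : (1 : ℝ) ≤ (H.card : ℝ) := by
    exact_mod_cast Finset.card_pos.2 hne
  have ht : (H.card : ℝ) ≤ (S1.ncard : ℝ) := by exact_mod_cast hTP
  have hu : (S2.ncard : ℝ) + (S3.ncard : ℝ) ≤ (U.card : ℝ) := by exact_mod_cast hUcard
  have hp0 : (0 : ℝ) ≤ (S2.ncard : ℝ) := Nat.cast_nonneg _
  have hn0 : (0 : ℝ) ≤ (S3.ncard : ℝ) := Nat.cast_nonneg _
  have hd1 : (0 : ℝ) < 2 * (H.card : ℝ) + (U.card : ℝ) := by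
    have : (0:ℝ) ≤ (U.card : ℝ) := Nat.cast_nonneg _
    linarith
  have hd2 : (0 : ℝ) < 2 * (S1.ncard : ℝ) + (S2.ncard : ℝ) + (S3.ncard : ℝ) := by
    linarith
  rw [div_le_div_iff₀ hd1 hd2]
  nlinarith [mul_nonneg hp0 hn0]
end
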